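/- Let R be a strongly ℤ-graded ring with grading 𝒜. For every n ∈ ℤ, the homogeneous component 𝒜 n, regarded as a right module over the subring 𝒜 0 (equivalently, as a left module over the opposite ring (𝒜 0)ᵐᵒᵖ, acting by op(a) • x = x·a), is finitely generated and projective. -/
import Mathlib


/-- A ℤ-graded ring is *strongly graded* if `𝒜 i * 𝒜 j = 𝒜 (i + j)` for all `i j`. -/
def IsStronglyGraded {R : Type*} [Ring R] (𝒜 : ℤ → Submodule ℤ R) : Prop :=
  ∀ i j : ℤ, 𝒜 i * 𝒜 j = 𝒜 (i + j)

variable {R : Type*} [Ring R] (𝒜 : ℤ → Submodule ℤ R) [GradedRing 𝒜]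

/-- The homogeneous component `𝒜 n` is a right module over the subring `𝒜 0`,
i.e. a left module over the opposite ring `(𝒜 0)ᵐᵒᵖ`, with the action
`op a • x = x * a` given by multiplication in `R`. -/
instance gradeRightModule (n : ℤ) : Module ((𝒜 0)ᵐᵒᵖ) (𝒜 n) where
  smul a x := ⟨(x : R) * (a.unop : R), by simpa using SetLike.mul_mem_graded x.2 a.unop.2⟩
  one_smul x := Subtype.ext (mul_one _)
  mul_smul a b x := Subtype.ext (mul_assoc (x : R) _ _).symm
  smul_zero a := Subtype.ext (zero_mul _)
  smul_add a x y := Subtype.ext (add_mul _ _ _)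
  add_smul a b x := Subtype.ext (mul_add _ _ _)
  zero_smul x := Subtype.ext (mul_zero _)

lemma coe_opsmul {n : ℤ} (a : (𝒜 0)ᵐᵒᵖ) (x : 𝒜 n) :
    ((a • x : 𝒜 n) : R) = (x : R) * (a.unop : R) := rfl

/-- If `R` is strongly ℤ-graded then every homogeneous component `𝒜 n` is a
finitely generated projective right `𝒜 0`-module. -/
theorem grade_finite_projective_right (h : IsStronglyGraded 𝒜) (n : ℤ) :
    Module.Finite ((𝒜 0)ᵐᵒᵖ) (𝒜 n) ∧ Module.Projective ((𝒜 0)ᵐᵒᵖ) (𝒜 n) := by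
  have h1 : (1 : R) ∈ 𝒜 n * 𝒜 (-n) := by
    rw [h n (-n)]
    simpa using SetLike.one_mem_graded 𝒜
  obtain ⟨k, x, y, hxy⟩ : ∃ (k : ℕ) (x : Fin k → 𝒜 n) (y : Fin k → 𝒜 (-n)),
      ∑ i, (x i : R) * (y i : R) = 1 := by
    have : ∀ r : R, r ∈ 𝒜 n * 𝒜 (-n) → ∃ (k : ℕ) (x : Fin k → 𝒜 n) (y : Fin k → 𝒜 (-n)),
        ∑ i, (x i : R) * (y i : R) = r := by
      intro r hr
      refine Submodule.mul_induction_on hr ?_ ?_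
      · intro m hm p hp
        exact ⟨1, fun _ => ⟨m, hm⟩, fun _ => ⟨p, hp⟩, by simp⟩
      · rintro a b ⟨k₁, x₁, y₁, h₁⟩ ⟨k₂, x₂, y₂, h₂⟩
        refine ⟨k₁ + k₂, Fin.append x₁ x₂, Fin.append y₁ y₂, ?_⟩
        rw [Fin.sum_univ_add]
        simp [h₁, h₂]
    exact this 1 h1
  have hy0 : ∀ (i : Fin k) (m : 𝒜 n), (y i : R) * (m : R) ∈ 𝒜 0 := fun i m => by
    simpa using SetLike.mul_mem_graded (y i).2 m.2
  -- the "coefficient" map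
  let f : 𝒜 n →ₗ[(𝒜 0)ᵐᵒᵖ] (Fin k → (𝒜 0)ᵐᵒᵖ) :=
    { toFun := fun m i => MulOpposite.op ⟨(y i : R) * (m : R), hy0 i m⟩
      map_add' := by
        intro m₁ m₂
        funext i
        apply MulOpposite.unop_injective
        exact Subtype.ext (mul_add _ _ _)
      map_smul' := by
        intro c m
        funext i
        apply MulOpposite.unop_injective
        apply Subtype.ext
        show (y i : R) * ((m : R) * (c.unop : R)) = ((y i : R) * (m : R)) * (c.unop : R)
        exact (mul_assoc _ _ _).symm }
  -- the "combination" map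
  let g : (Fin k → (𝒜 0)ᵐᵒᵖ) →ₗ[(𝒜 0)ᵐᵒᵖ] 𝒜 n :=
    { toFun := fun v => ∑ i, v i • x i
      map_add' := by
        intro v w
        simp [add_smul, Finset.sum_add_distrib]
      map_smul' := by
        intro c v
        simp only [Pi.smul_apply, smul_eq_mul, RingHom.id_apply, mul_smul]
        exact (Finset.smul_sum (r := c) (f := fun i => v i • x i) (s := Finset.univ)).symm }
  have hsec : g.comp f = LinearMap.id := by
    ext m
    show ((∑ i, (MulOpposite.op (⟨(y i : R) * (m : R), hy0 i m⟩ : 𝒜 0)) • x i : 𝒜 n) : R)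
      = (m : R)
    rw [AddSubmonoidClass.coe_finset_sum]
    simp only [coe_opsmul 𝒜, MulOpposite.unop_op]
    calc ∑ i, (x i : R) * ((⟨(y i : R) * (m : R), hy0 i m⟩ : 𝒜 0) : R)
        = (∑ i, (x i : R) * (y i : R)) * (m : R) := by
          rw [Finset.sum_mul]
          exact Finset.sum_congr rfl fun i _ => (mul_assoc _ _ _).symm
      _ = (m : R) := by rw [hxy, one_mul]
  have hgsurj : Function.Surjective g := fun m =>
    ⟨f m, by simpa using congrArg (fun φ => φ m) hsec⟩
  exact ⟨Module.Finite.of_surjective g hgsurj, Module.Projective.of_split f g hsec⟩
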